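/- For every real number t with t ∉ {−1,0,1}, the biquadratic form p_t is not a sum of squares of bilinear forms: there is no natural number N and no family of real 3×3 matrices B₁, …, B_N such that p_t(x,y) = Σ_{i=1}^{N} (xᵀBᵢy)² for all x, y ∈ ℝ³. -/

import Mathlib

/-!
If `p_t = ∑ᵢ (xᵀ Bᵢ y)²`, every `Bᵢ` vanishes on the real zeros of `p_t`. The zeros `(v, v)` with
`v = (1, ±1, ±1)` force `tr Bᵢ = 0` and `(Bᵢ)₀₁ = -(Bᵢ)₁₀`, and then the zero
`((1, t, 0), (t, 1, 0))` gives `(t² - 1) (Bᵢ)₀₁ = -t (Bᵢ)₂₂`. Squaring, summing over `i` and reading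
off the coefficients `∑ (Bᵢ)₀₁² = t⁴` of `x₀² y₁²` and `∑ (Bᵢ)₂₂² = (t² - 1)²` of `x₂² y₂²` yields
`(t² - 1)² t⁴ = t² (t² - 1)²`, which is impossible unless `t ∈ {-1, 0, 1}`.
-/

open Matrix

/-- The biquadratic form `p_t(x, y) = yᵀ Φ_t(xxᵀ) y`. -/
def pform (t : ℝ) (x y : Fin 3 → ℝ) : ℝ :=
  ((t^2-1)^2 * x 0^2 + x 1^2 + t^4 * x 2^2) * y 0^2 +
  ((t^2-1)^2 * x 1^2 + x 2^2 + t^4 * x 0^2) * y 1^2 +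
  ((t^2-1)^2 * x 2^2 + x 0^2 + t^4 * x 1^2) * y 2^2 -
  2 * (t^4-t^2+1) * (x 0 * x 1 * y 0 * y 1 + x 0 * x 2 * y 0 * y 2 + x 1 * x 2 * y 1 * y 2)

def VanishesOnZerosOf (t : ℝ) (B : Matrix (Fin 3) (Fin 3) ℝ) : Prop :=
  ∀ x y, pform t x y = 0 → x ⬝ᵥ B *ᵥ y = 0

lemma pform_self (t : ℝ) (v : Fin 3 → ℝ) :
    pform t v v = (t ^ 2 - 1) ^ 2 / 2 *
      ((v 0 ^ 2 - v 1 ^ 2) ^ 2 + (v 1 ^ 2 - v 2 ^ 2) ^ 2 + (v 2 ^ 2 - v 0 ^ 2) ^ 2) := by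
  unfold pform
  ring

lemma pform_self_eq_zero_of_sq_eq_one (t : ℝ) {v : Fin 3 → ℝ} (hv : ∀ i, v i ^ 2 = 1) :
    pform t v v = 0 := by
  rw [pform_self, hv 0, hv 1, hv 2]
  ring

lemma pform_one_t_zero_t_one_zero (t : ℝ) : pform t ![1, t, 0] ![t, 1, 0] = 0 := by
  simp only [pform, cons_val_zero, cons_val_one, cons_val]
  ring

lemma pform_single_zero_single_one (t : ℝ) : pform t (Pi.single 0 1) (Pi.single 1 1) = t ^ 4 := by
  simp [pform]

lemma pform_single_two_single_two (t : ℝ) :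
    pform t (Pi.single 2 1) (Pi.single 2 1) = (t ^ 2 - 1) ^ 2 := by
  simp [pform]

lemma vanishesOnZerosOf_of_sum_sq {t : ℝ} {ι : Type*} [Fintype ι]
    {B : ι → Matrix (Fin 3) (Fin 3) ℝ}
    (h : ∀ x y, pform t x y = ∑ i, (x ⬝ᵥ B i *ᵥ y) ^ 2) (i : ι) :
    VanishesOnZerosOf t (B i) := by
  intro x y hxy
  simp only [h, sq] at hxy
  exact (Finset.sum_mul_self_eq_zero_iff _ _).mp hxy i (Finset.mem_univ i)

namespace VanishesOnZerosOf

variable {t : ℝ} {B : Matrix (Fin 3) (Fin 3) ℝ}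

lemma trace_eq_zero_and_skew_zero_one (hB : VanishesOnZerosOf t B) :
    B.trace = 0 ∧ B 0 1 + B 1 0 = 0 := by
  have sign (a b : ℝ) (ha : a ^ 2 = 1) (hb : b ^ 2 = 1) :
      ![1, a, b] ⬝ᵥ B *ᵥ ![1, a, b] = 0 :=
    hB _ _ <| pform_self_eq_zero_of_sq_eq_one t fun i => by fin_cases i <;> simp [ha, hb]
  have e₁ := sign 1 1 (by norm_num) (by norm_num)
  have e₂ := sign 1 (-1) (by norm_num) (by norm_num)
  have e₃ := sign (-1) 1 (by norm_num) (by norm_num)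
  have e₄ := sign (-1) (-1) (by norm_num) (by norm_num)
  simp only [dotProduct, mulVec, Fin.sum_univ_three, cons_val_zero, cons_val_one, cons_val]
    at e₁ e₂ e₃ e₄
  rw [trace_fin_three]
  constructor <;> linarith

lemma sq_sub_one_mul_apply_zero_one (hB : VanishesOnZerosOf t B) :
    (t ^ 2 - 1) * B 0 1 = -(t * B 2 2) := by
  obtain ⟨htrace, hskew⟩ := hB.trace_eq_zero_and_skew_zero_one
  rw [trace_fin_three] at htrace
  have e := hB _ _ (pform_one_t_zero_t_one_zero t)
  simp only [dotProduct, mulVec, Fin.sum_univ_three, cons_val_zero, cons_val_one, cons_val] at e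
  linear_combination t * htrace + t ^ 2 * hskew - e

end VanishesOnZerosOf

/-- For `t ∉ {-1, 0, 1}`, the biquadratic form `p_t` is not a sum of squares of bilinear
forms. -/
theorem pform_not_sos (t : ℝ) (ht : t ∉ ({-1, 0, 1} : Set ℝ)) :
    ¬ ∃ (N : ℕ) (B : Fin N → Matrix (Fin 3) (Fin 3) ℝ),
      ∀ x y : Fin 3 → ℝ, pform t x y = ∑ i, (x ⬝ᵥ (B i).mulVec y)^2 := by
  rintro ⟨N, B, h⟩
  have coeff₁ : ∑ i, B i 0 1 ^ 2 = t ^ 4 := by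
    simpa [mulVec_single_one, single_one_dotProduct, pform_single_zero_single_one]
      using (h (Pi.single 0 1) (Pi.single 1 1)).symm
  have coeff₂ : ∑ i, B i 2 2 ^ 2 = (t ^ 2 - 1) ^ 2 := by
    simpa [mulVec_single_one, single_one_dotProduct, pform_single_two_single_two]
      using (h (Pi.single 2 1) (Pi.single 2 1)).symm
  have hsq : (t ^ 2 - 1) ^ 2 * t ^ 4 = t ^ 2 * (t ^ 2 - 1) ^ 2 :=
    calc (t ^ 2 - 1) ^ 2 * t ^ 4 = ∑ i, ((t ^ 2 - 1) * B i 0 1) ^ 2 := by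
          rw [← coeff₁, Finset.mul_sum]; simp only [mul_pow]
      _ = ∑ i, (t * B i 2 2) ^ 2 := Finset.sum_congr rfl fun i _ => by
          rw [(vanishesOnZerosOf_of_sum_sq h i).sq_sub_one_mul_apply_zero_one, neg_sq]
      _ = t ^ 2 * (t ^ 2 - 1) ^ 2 := by rw [← coeff₂, Finset.mul_sum]; simp only [mul_pow]
  have ht₀ : t ≠ 0 := fun h0 => ht (by simp [h0])
  have ht₁ : t ^ 2 - 1 ≠ 0 := fun h1 => ht <| by
    rcases sq_eq_one_iff.mp (sub_eq_zero.mp h1) with rfl | rfl <;> simp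
  have hzero : t ^ 2 * (t ^ 2 - 1) ^ 3 = 0 := by linear_combination hsq
  exact mul_ne_zero (pow_ne_zero 2 ht₀) (pow_ne_zero 3 ht₁) hzero
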